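/- Let 𝓛 ⊆ ℝ^d be a full-rank lattice and let 𝓛* be its reciprocal lattice with measurable fundamental domain Γ*. Then for every Schwartz function u : ℝ^d → ℂ and every x ∈ ℝ^d, u(x) = (1/vol(Γ*)) ∫_{Γ*} (Σ_{ℓ ∈ 𝓛} u(x + ℓ) e^{−i k·(x + ℓ)}) e^{i k·x} dk. -/

import Mathlib

/-!
Multiplying the Bloch transform by `e^{ik·x}` cancels the phase `e^{-ik·x}` and leaves
`Σ_ℓ u(x + ℓ) e^{-ik·ℓ}`, which converges absolutely because a Schwartz function is summable
over any discrete subgroup; hence sum and `k`-integral may be swapped. For `ℓ ∈ 𝓛` the character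
`k ↦ e^{-ik·ℓ}` is `𝓛*`-periodic, so its integral over the fundamental domain `Γ*` does not change
when `Γ*` is translated; translating by `t` with `t·ℓ = π` flips its sign, so it vanishes unless
`ℓ = 0`. Only `ℓ = 0` survives, giving `vol(Γ*) u(x)`. Since `𝓛*` is the `ℤ`-span of the reciprocal
basis, `Γ*` is a fundamental domain of a lattice and `0 < vol(Γ*) < ∞`.
-/

open MeasureTheory

noncomputable section

/-- A set `L ⊆ ℝ^d` is a full-rank lattice if it is the ℤ-span of an ℝ-basis. -/
def IsFullRankLattice {d : ℕ} (L : Set (EuclideanSpace ℝ (Fin d))) : Prop :=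
  ∃ a : Module.Basis (Fin d) ℝ (EuclideanSpace ℝ (Fin d)),
    L = {z | ∃ n : Fin d → ℤ, z = ∑ i, (n i : ℝ) • a i}

/-- `Γ` is a measurable fundamental domain for the lattice `L`: almost every point of
`ℝ^d` has a unique translate by `L` lying in `Γ`. -/
def IsFundDomain {d : ℕ} (L Γ : Set (EuclideanSpace ℝ (Fin d))) : Prop :=
  MeasurableSet Γ ∧
    ∀ᵐ x : EuclideanSpace ℝ (Fin d) ∂volume, ∃! ℓ, ℓ ∈ L ∧ x - ℓ ∈ Γ

/-- The reciprocal (dual) lattice `L* = {K : K·ℓ ∈ 2πℤ for all ℓ ∈ L}`. -/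
def dualLattice {d : ℕ} (L : Set (EuclideanSpace ℝ (Fin d))) :
    Set (EuclideanSpace ℝ (Fin d)) :=
  {K | ∀ ℓ ∈ L, ∃ n : ℤ, (inner ℝ K ℓ : ℝ) = 2 * Real.pi * n}

open Complex Real Set Submodule

theorem SchwartzMap.summable_norm_apply_add_discrete {E F : Type*} [NormedAddCommGroup E]
    [NormedSpace ℝ E] [FiniteDimensional ℝ E] [NormedAddCommGroup F] [NormedSpace ℝ F]
    (L : Submodule ℤ E) [DiscreteTopology L] (u : SchwartzMap E F) (x : E) :
    Summable fun ℓ : L => ‖u (x + ℓ)‖ := by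
  obtain ⟨C, -, hC⟩ := u.decay (Module.finrank ℤ L + 1) 0
  refine Summable.of_norm_bounded_eventually
    ((ZLattice.summable_norm_sub_inv_pow L _ (Nat.lt_succ_self _) (-x)).mul_left C) ?_
  -- `‖0‖⁻¹ = 0`, so the bound can only fail at the single point `ℓ = -x`.
  have hzero : {ℓ : L | x + ℓ = 0}.Finite :=
    Set.Subsingleton.finite fun ℓ hℓ ℓ' hℓ' =>
      Subtype.ext (add_left_cancel ((hℓ : _ = _).trans (hℓ' : _ = _).symm))
  refine hzero.subset fun ℓ hbad => by_contra fun hne => hbad ?_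
  have hpos : 0 < ‖x + ℓ‖ := norm_pos_iff.mpr hne
  have hdecay := hC (x + ℓ)
  rw [norm_iteratedFDeriv_zero] at hdecay
  show ‖‖u (x + ℓ)‖‖ ≤ C * ‖(ℓ : E) - -x‖⁻¹ ^ (Module.finrank ℤ L + 1)
  rw [norm_norm, sub_neg_eq_add, add_comm (ℓ : E), inv_pow, ← div_eq_mul_inv,
    le_div_iff₀ (by positivity), mul_comm]
  exact hdecay

theorem MeasureTheory.IsAddFundamentalDomain.mk_ae {G α : Type*} [AddGroup G] [AddAction G α]
    [MeasurableSpace α] {s : Set α} {μ : Measure α} (h_meas : NullMeasurableSet s μ)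
    (h_exists : ∀ᵐ x ∂μ, ∃! g : G, g +ᵥ x ∈ s) : IsAddFundamentalDomain G s μ where
  nullMeasurableSet := h_meas
  ae_covers := h_exists.mono fun _ hx => hx.exists
  aedisjoint g g' hne := measure_mono_null (t := {x | ¬∃! g : G, g +ᵥ x ∈ s})
    (fun x ⟨hg, hg'⟩ hx => by
      rw [mem_vadd_set_iff_neg_vadd_mem] at hg hg'
      exact hne (neg_injective (hx.unique hg hg'))) (ae_iff.mp h_exists)

section Bloch

variable {E : Type*} [NormedAddCommGroup E] [InnerProductSpace ℝ E]

theorem exp_neg_I_mul_inner_add_left (a b ℓ : E) :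
    exp (-I * ((inner ℝ (a + b) ℓ : ℝ) : ℂ)) =
      exp (-I * ((inner ℝ a ℓ : ℝ) : ℂ)) * exp (-I * ((inner ℝ b ℓ : ℝ) : ℂ)) := by
  rw [inner_add_left, ← Complex.exp_add]
  push_cast
  ring_nf

theorem exp_neg_I_mul_two_pi_mul_intCast (n : ℤ) : exp (-I * ((2 * π * n : ℝ) : ℂ)) = 1 := by
  rw [← Complex.exp_int_mul_two_pi_mul_I (-n)]
  push_cast
  ring_nf

theorem norm_exp_neg_I_mul_ofReal (r : ℝ) : ‖exp (-I * (r : ℂ))‖ = 1 := by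
  rw [neg_mul, ← mul_neg, ← ofReal_neg]
  exact norm_exp_I_mul_ofReal _

def blochTransform (L : Set E) (u : E → ℂ) (k x : E) : ℂ :=
  ∑' ℓ : L, u (x + ℓ) * exp (-I * ((inner ℝ k (x + ℓ) : ℝ) : ℂ))

theorem blochTransform_mul_exp_I_mul_inner (L : Set E) (u : E → ℂ) (k x : E) :
    blochTransform L u k x * exp (I * ((inner ℝ k x : ℝ) : ℂ)) =
      ∑' ℓ : L, u (x + ℓ) * exp (-I * ((inner ℝ k ℓ : ℝ) : ℂ)) := by
  rw [blochTransform, ← tsum_mul_right]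
  refine tsum_congr fun ℓ => ?_
  rw [mul_assoc, ← Complex.exp_add, inner_add_right]
  congr 2
  push_cast
  ring

variable [MeasurableSpace E] [BorelSpace E] {μ : Measure E} [μ.IsAddLeftInvariant]

theorem setIntegral_exp_neg_I_mul_inner_eq_zero {Λ : AddSubgroup E} [Countable Λ] {Γ : Set E}
    (hΓ : IsAddFundamentalDomain Λ Γ μ) {ℓ : E} (hℓ : ℓ ≠ 0)
    (hΛℓ : ∀ g ∈ Λ, ∃ n : ℤ, inner ℝ g ℓ = 2 * π * n) :
    ∫ k in Γ, exp (-I * ((inner ℝ k ℓ : ℝ) : ℂ)) ∂μ = 0 := by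
  set χ : E → ℂ := fun k => exp (-I * ((inner ℝ k ℓ : ℝ) : ℂ))
  have hperiodic : ∀ (g : Λ) (k : E), χ (g +ᵥ k) = χ k := fun g k => by
    obtain ⟨n, hn⟩ := hΛℓ g g.2
    simp only [χ, AddSubgroup.vadd_def, vadd_eq_add, exp_neg_I_mul_inner_add_left, hn,
      exp_neg_I_mul_two_pi_mul_intCast, one_mul]
  set t : E := (π / inner ℝ ℓ ℓ) • ℓ
  have hflip : ∀ k, χ (t + k) = -χ k := fun k => by
    have ht : inner ℝ t ℓ = π := by
      rw [real_inner_smul_left, div_mul_cancel₀ _ (inner_self_ne_zero.mpr hℓ)]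
    have hπ : exp (-I * (π : ℂ)) = -1 := by
      rw [neg_mul, mul_comm, Complex.exp_neg, Complex.exp_pi_mul_I, inv_neg, inv_one]
    rw [show χ (t + k) = _ from exp_neg_I_mul_inner_add_left t k ℓ, ht, hπ, neg_one_mul]
  have hshift : ∫ k in Γ, χ k ∂μ = ∫ k in Γ, χ (t + k) ∂μ := by
    rw [hΓ.setIntegral_eq (hΓ.vadd_of_comm t) hperiodic]
    exact (measurePreserving_vadd t μ).setIntegral_image_emb
      (measurableEmbedding_const_vadd t) χ Γ
  simp only [hflip, integral_neg] at hshift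
  exact CharZero.eq_neg_self_iff.mp hshift

theorem setIntegral_blochTransform_mul_exp_I_mul_inner [FiniteDimensional ℝ E]
    (L : Submodule ℤ E) [DiscreteTopology L] (Λ : AddSubgroup E) [Countable Λ]
    (hΛL : ∀ g ∈ Λ, ∀ ℓ ∈ L, ∃ n : ℤ, inner ℝ g ℓ = 2 * π * n) {Γ : Set E}
    (hΓ : IsAddFundamentalDomain Λ Γ μ) (hΓfin : μ Γ ≠ ⊤) (u : SchwartzMap E ℂ) (x : E) :
    ∫ k in Γ, blochTransform L u k x * exp (I * ((inner ℝ k x : ℝ) : ℂ)) ∂μ =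
      μ.real Γ * u x := by
  have : IsFiniteMeasure (μ.restrict Γ) := isFiniteMeasure_restrict.mpr hΓfin
  have : Countable L := countable_of_Lindelof_of_discrete
  set F : L → E → ℂ := fun ℓ k => u (x + ℓ) * exp (-I * ((inner ℝ k ℓ : ℝ) : ℂ))
  have hF_int : ∀ ℓ, Integrable (F ℓ) (μ.restrict Γ) := fun ℓ =>
    (Integrable.of_bound (by fun_prop) 1
      (ae_of_all _ fun k => (norm_exp_neg_I_mul_ofReal _).le)).const_mul _
  have hF_norm : ∀ ℓ, ∫ k in Γ, ‖F ℓ k‖ ∂μ = ‖u (x + ℓ)‖ * μ.real Γ := fun ℓ => by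
    simp only [F, norm_mul, norm_exp_neg_I_mul_ofReal, mul_one]
    rw [setIntegral_const, smul_eq_mul, mul_comm]
  calc ∫ k in Γ, blochTransform L u k x * exp (I * ((inner ℝ k x : ℝ) : ℂ)) ∂μ
      = ∫ k in Γ, ∑' ℓ : L, F ℓ k ∂μ := by
        simp_rw [blochTransform_mul_exp_I_mul_inner]
        rfl
    _ = ∑' ℓ : L, ∫ k in Γ, F ℓ k ∂μ := by
        refine (integral_tsum_of_summable_integral_norm hF_int ?_).symm
        simpa only [hF_norm] using
          (u.summable_norm_apply_add_discrete L x).mul_right (μ.real Γ)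
    _ = ∫ k in Γ, F 0 k ∂μ := tsum_eq_single 0 fun ℓ hℓ => by
        rw [integral_const_mul, setIntegral_exp_neg_I_mul_inner_eq_zero hΓ
          (by exact_mod_cast hℓ) (hΛL · · ℓ ℓ.2), mul_zero]
    _ = μ.real Γ * u x := by simp [F, mul_comm]

end Bloch

theorem blochTransform_inversion {E : Type*} [NormedAddCommGroup E] [InnerProductSpace ℝ E]
    [FiniteDimensional ℝ E] [MeasurableSpace E] [BorelSpace E] {μ : Measure E}
    [μ.IsAddHaarMeasure] (L Λ : Submodule ℤ E) [DiscreteTopology L] [DiscreteTopology Λ]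
    [IsZLattice ℝ Λ] (hΛL : ∀ g ∈ Λ, ∀ ℓ ∈ L, ∃ n : ℤ, inner ℝ g ℓ = 2 * π * n) {Γ : Set E}
    (hΓ : IsAddFundamentalDomain Λ Γ μ) (u : SchwartzMap E ℂ) (x : E) :
    u x = (1 / (μ.real Γ : ℂ)) *
      ∫ k in Γ, blochTransform L u k x * exp (I * ((inner ℝ k x : ℝ) : ℂ)) ∂μ := by
  have hvol : 0 < μ.real Γ :=
    ZLattice.covolume_eq_measure_fundamentalDomain Λ μ hΓ ▸ ZLattice.covolume_pos Λ μ
  have : Countable Λ.toAddSubgroup := inferInstanceAs (Countable Λ)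
  rw [setIntegral_blochTransform_mul_exp_I_mul_inner L Λ.toAddSubgroup hΛL hΓ
    (ENNReal.toReal_pos_iff.mp hvol).2.ne u x, one_div,
    inv_mul_cancel_left₀ (ofReal_ne_zero.mpr hvol.ne')]

/-- With the factor `(2π)⁻¹`, `LinearMap.BilinForm.dualSubmodule` is the reciprocal lattice in
the normalisation `K·ℓ ∈ 2πℤ`. -/
def reciprocalForm (E : Type*) [NormedAddCommGroup E] [InnerProductSpace ℝ E] :
    LinearMap.BilinForm ℝ E :=
  (2 * π)⁻¹ • innerₗ E

theorem reciprocalForm_nondegenerate (E : Type*) [NormedAddCommGroup E] [InnerProductSpace ℝ E] :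
    (reciprocalForm E).Nondegenerate := by
  have h : ∀ x : E, reciprocalForm E x x = 0 → x = 0 := fun x hx => by
    simpa [reciprocalForm, pi_ne_zero] using hx
  exact ⟨fun x hx => h x (hx x), fun y hy => h y (hy y)⟩

theorem dualLattice_coe_eq_dualSubmodule {d : ℕ} (L : Submodule ℤ (EuclideanSpace ℝ (Fin d))) :
    dualLattice (L : Set (EuclideanSpace ℝ (Fin d))) = (reciprocalForm _).dualSubmodule L := by
  ext K
  simp only [dualLattice, Set.mem_ofPred_eq, SetLike.mem_coe,
    LinearMap.BilinForm.mem_dualSubmodule, Submodule.mem_one, reciprocalForm,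
    LinearMap.smul_apply, innerₗ_apply_apply, smul_eq_mul, algebraMap_int_eq, eq_intCast]
  refine forall₂_congr fun ℓ _ => exists_congr fun n => ?_
  rw [eq_inv_mul_iff_mul_eq₀ (by positivity), eq_comm]

theorem dualLattice_span_basis {d : ℕ} (a : Module.Basis (Fin d) ℝ (EuclideanSpace ℝ (Fin d))) :
    dualLattice (span ℤ (range a) : Set (EuclideanSpace ℝ (Fin d))) =
      span ℤ (range ((reciprocalForm _).dualBasis (reciprocalForm_nondegenerate _) a)) := by
  rw [dualLattice_coe_eq_dualSubmodule, LinearMap.BilinForm.dualSubmodule_span_of_basis]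

theorem IsFullRankLattice.exists_eq_span {d : ℕ} {L : Set (EuclideanSpace ℝ (Fin d))}
    (hL : IsFullRankLattice L) :
    ∃ a : Module.Basis (Fin d) ℝ (EuclideanSpace ℝ (Fin d)), L = span ℤ (range a) := by
  obtain ⟨a, rfl⟩ := hL
  refine ⟨a, Set.ext fun z => ?_⟩
  simp only [Set.mem_ofPred_eq, SetLike.mem_coe, mem_span_range_iff_exists_fun,
    Int.cast_smul_eq_zsmul, eq_comm]

theorem IsFundDomain.isAddFundamentalDomain {d : ℕ} {Λ : Submodule ℤ (EuclideanSpace ℝ (Fin d))}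
    {Γ : Set (EuclideanSpace ℝ (Fin d))} (h : IsFundDomain (Λ : Set _) Γ) :
    IsAddFundamentalDomain Λ Γ volume := by
  refine .mk_ae h.1.nullMeasurableSet (h.2.mono fun y ⟨ℓ, ⟨hℓΛ, hℓΓ⟩, huniq⟩ => ?_)
  refine ⟨-⟨ℓ, hℓΛ⟩, show -ℓ + y ∈ Γ by rwa [neg_add_eq_sub], fun g (hg : (g : _) + y ∈ Γ) => ?_⟩
  have hg_eq : -(g : _) = ℓ := huniq _ ⟨neg_mem g.2, by rwa [sub_neg_eq_add, add_comm]⟩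
  exact Subtype.ext (by simp [← hg_eq])

/-- Bloch inversion formula: a Schwartz function is recovered from its Bloch transform
`(𝓑u)(k)(x) = Σ_{ℓ ∈ L} u(x + ℓ) e^{−i k·(x+ℓ)}` by averaging over quasi-momenta. -/
theorem bloch_transform_inversion
    {d : ℕ}
    (L : Set (EuclideanSpace ℝ (Fin d))) (hL : IsFullRankLattice L)
    (Γstar : Set (EuclideanSpace ℝ (Fin d))) (hΓstar : IsFundDomain (dualLattice L) Γstar)
    (u : SchwartzMap (EuclideanSpace ℝ (Fin d)) ℂ) (x : EuclideanSpace ℝ (Fin d)) :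
    u x = (1 / ((volume Γstar).toReal : ℂ)) *
      ∫ k in Γstar,
        (∑' ℓ : L, u (x + (ℓ : EuclideanSpace ℝ (Fin d))) *
          Complex.exp (-(Complex.I) *
            ((inner ℝ k (x + (ℓ : EuclideanSpace ℝ (Fin d))) : ℝ) : ℂ))) *
        Complex.exp (Complex.I * ((inner ℝ k x : ℝ) : ℂ)) := by
  obtain ⟨a, rfl⟩ := hL.exists_eq_span
  have hdual := dualLattice_span_basis a
  rw [hdual] at hΓstar
  refine blochTransform_inversion _ _ (fun g hg => ?_) hΓstar.isAddFundamentalDomain u x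
  show g ∈ dualLattice _
  rwa [hdual]
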